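/- Let m ≥ 3 and let u_k = (cos(2πk/m), sin(2πk/m)) ∈ ℝ² for k = 0, 1, …, m−1 be the radius vectors of the vertices of a regular m-gon centered at the origin. Then for every even r = 2j with 0 < 2j < m there exists a nonzero constant C ∈ ℝ such that for every ξ = (ξ₁, ξ₂) ∈ ℝ², the elementary symmetric polynomial e_{2j} applied to the tuple (⟨u_0, ξ⟩, …, ⟨u_{m-1}, ξ⟩) equals C · (ξ₁² + ξ₂²)^j. -/

import Mathlib

/-!
Put `ζ = e^{2πi/m}`, `u = ξ₁ + iξ₂`, `v = ξ₁ - iξ₂`. Then `2⟨u_k, ξ⟩ = ζ^k v + ζ^{-k} u`, so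
`2^{2j} e_{2j}(⟨u_k, ξ⟩) = E(u, v) := e_{2j}(ζ^k v + ζ^{-k} u)`. Multiplication by `ζ` permutes
the `m`-th roots of unity, hence `E(ζu, ζ⁻¹v) = E(u, v)`; with homogeneity this gives
`E(u, ζ²v) = ζ^{2j} E(u, v)`. As `v ↦ E(u, v)` is a polynomial of degree at most `2j < m`, it is a
multiple of `v^j`, and by the symmetry `u ↔ v` we get `E(u, v) = (uv)^j E(1, 1)` with
`uv = ξ₁² + ξ₂²`.

The constant `E(1, 1) = e_{2j}(ζ^k + ζ^{-k})` is the coefficient of `X^{m-2j}` in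
`∏_k (X - ζ^k - ζ^{-k}) = D_m(X) - 2`, where `D_m(α + α⁻¹) = α^m + α^{-m}` is the Dickson
polynomial; the coefficients of `D_m` strictly alternate in sign, so this one is nonzero.
-/

open Polynomial Finset

theorem Multiset.map_esymm {R S : Type*} [CommSemiring R] [CommSemiring S] (f : R →+* S)
    (s : Multiset R) (n : ℕ) : f (s.esymm n) = (s.map f).esymm n := by
  simp [esymm, map_multiset_sum, powersetCard_map, map_map, map_multiset_prod]

namespace Polynomial

theorem natDegree_esymm_le {R : Type*} [CommSemiring R] {s : Multiset R[X]}
    (hs : ∀ p ∈ s, p.natDegree ≤ 1) (n : ℕ) : (s.esymm n).natDegree ≤ n := by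
  refine (natDegree_multiset_sum_le _).trans (Multiset.max_le_of_forall_le _ _ fun d hd => ?_)
  simp only [Multiset.map_map, Function.comp_apply, Multiset.mem_map] at hd
  obtain ⟨t, ht, rfl⟩ := hd
  obtain ⟨hts, rfl⟩ := Multiset.mem_powersetCard.1 ht
  refine (natDegree_multiset_prod_le _).trans ?_
  simpa using Multiset.sum_map_le_sum_map natDegree (fun _ => 1)
    fun p hp => hs p (Multiset.subset_of_le hts hp)

theorem eq_C_mul_X_pow_of_eval_mul {K : Type*} [Field K] [Infinite K] {p : K[X]} {a : K} {j : ℕ}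
    (h : ∀ x, p.eval (a * x) = a ^ j * p.eval x) (ha : ∀ t ≤ p.natDegree, a ^ t = a ^ j → t = j) :
    p = C (p.coeff j) * X ^ j := by
  have hcomp : p.comp (C a * X) = C (a ^ j) * p := funext fun x => by simp [h]
  ext t
  have hcoeff : p.coeff t * a ^ t = a ^ j * p.coeff t := by
    simpa only [comp_C_mul_X_coeff, coeff_C_mul] using congr_arg (coeff · t) hcomp
  rw [coeff_C_mul_X_pow]
  split_ifs with htj
  · rw [htj]
  by_cases htp : t ≤ p.natDegree
  · have hne : a ^ t ≠ a ^ j := fun hat => htj (ha t htp hat)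
    have : (a ^ t - a ^ j) * p.coeff t = 0 := by linear_combination hcoeff
    exact (mul_eq_zero.1 this).resolve_left (sub_ne_zero.2 hne)
  · exact coeff_eq_zero_of_natDegree_lt (not_le.1 htp)

theorem natDegree_dickson_one_one_le {R : Type*} [CommRing R] :
    ∀ n, (dickson 1 (1 : R) n).natDegree ≤ n
  | 0 => by rw [dickson_zero]; norm_num
  | 1 => by simpa using natDegree_X_le
  | n + 2 => by
    rw [dickson_add_two, C_1, one_mul]
    exact natDegree_sub_le_of_le (natDegree_mul_le_of_le natDegree_X_le
      (natDegree_dickson_one_one_le (n + 1))) (natDegree_dickson_one_one_le n) |>.trans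
      (by omega)

theorem neg_one_pow_mul_coeff_dickson_one_one_pos :
    ∀ n j, 2 * j ≤ n → 0 < (-1) ^ j * (dickson 1 (1 : ℤ) n).coeff (n - 2 * j)
  | 0, 0, _ => by rw [dickson_zero]; norm_num
  | 1, 0, _ => by simp
  | n + 2, 0, _ => by
    have ih := neg_one_pow_mul_coeff_dickson_one_one_pos (n + 1) 0 le_add_self
    rw [dickson_add_two, C_1, one_mul, coeff_sub, Nat.sub_zero, coeff_X_mul,
      coeff_eq_zero_of_natDegree_lt ((natDegree_dickson_one_one_le n).trans_lt (by omega))]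
    simpa using ih
  | n + 2, j + 1, h => by
    have ih₂ := neg_one_pow_mul_coeff_dickson_one_one_pos n j (by omega)
    rw [show n - 2 * j = n + 2 - 2 * (j + 1) by omega] at ih₂
    rw [dickson_add_two, C_1, one_mul, coeff_sub, pow_succ]
    obtain h' | h' := Nat.lt_or_ge (2 * (j + 1)) (n + 2)
    · have ih₁ := neg_one_pow_mul_coeff_dickson_one_one_pos (n + 1) (j + 1) (by omega)
      rw [show n + 2 - 2 * (j + 1) = n + 1 - 2 * (j + 1) + 1 by omega, coeff_X_mul, pow_succ]
        at *
      linear_combination ih₁ + ih₂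
    · rw [show n + 2 - 2 * (j + 1) = 0 by omega, mul_coeff_zero, coeff_X_zero] at *
      linear_combination ih₂
  | 0, _ + 1, _ | 1, _ + 1, _ => by omega

end Polynomial

namespace IsPrimitiveRoot

section IsDomain

variable {R : Type*} [CommRing R] [IsDomain R] {ζ : R} {m : ℕ}

theorem univ_val_map_pow (hζ : IsPrimitiveRoot ζ m) :
    (univ : Finset (Fin m)).val.map (fun k : Fin m => ζ ^ (k : ℕ)) = nthRoots m 1 := by
  rw [hζ.nthRoots_eq (one_pow m), ← range_val, ← Nat.Iio_eq_range, ← Fin.map_valEmbedding_univ,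
    map_val, Multiset.map_map]
  simp only [Function.comp_def, Fin.valEmbedding_apply, mul_one]

theorem map_nthRoots_one (hζ : IsPrimitiveRoot ζ m) (hm : 0 < m) {f : R → R}
    (hf : Function.Injective f) (hmem : ∀ z, z ^ m = 1 → f z ^ m = 1) :
    (nthRoots m (1 : R)).map f = nthRoots m 1 := by
  refine Multiset.eq_of_le_of_card_le ((Multiset.le_iff_subset
    (hζ.nthRoots_one_nodup.map hf)).2 fun z hz => ?_) (by rw [Multiset.card_map])
  obtain ⟨w, hw, rfl⟩ := Multiset.mem_map.1 hz
  exact (mem_nthRoots hm).2 (hmem w ((mem_nthRoots hm).1 hw))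

theorem map_mul_nthRoots_one (hζ : IsPrimitiveRoot ζ m) (hm : 0 < m) :
    (nthRoots m (1 : R)).map (ζ * ·) = nthRoots m 1 :=
  hζ.map_nthRoots_one hm (mul_right_injective₀ (hζ.ne_zero hm.ne')) fun z hz => by
    rw [mul_pow, hζ.pow_eq_one, hz, one_mul]

theorem prod_nthRoots_one_sub (hζ : IsPrimitiveRoot ζ m) (hm : 0 < m) (x : R) :
    ((nthRoots m (1 : R)).map (x - ·)).prod = x ^ m - 1 := by
  have := prod_multiset_X_sub_C_of_monic_of_roots_card_eq (monic_X_pow_sub_C (1 : R) hm.ne')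
    (by rw [← nthRoots, hζ.card_nthRoots_one, natDegree_X_pow_sub_C])
  rw [← nthRoots] at this
  simpa [eval_multiset_prod] using congr_arg (eval x) this

end IsDomain

variable {K : Type*} [Field K] {ζ : K} {m : ℕ}

theorem eq_of_sq_pow_eq (hζ : IsPrimitiveRoot ζ m) {t j : ℕ} (ht : t ≤ 2 * j) (hj : 2 * j < m)
    (h : (ζ ^ 2) ^ t = (ζ ^ 2) ^ j) : t = j := by
  have hζ0 : ζ ≠ 0 := hζ.ne_zero (by omega)
  have hdvd : (m : ℤ) ∣ (2 * t : ℕ) - (2 * j : ℕ) := by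
    rw [← hζ.zpow_eq_one_iff_dvd, zpow_sub₀ hζ0, zpow_natCast, zpow_natCast, pow_mul, pow_mul, h,
      div_self (pow_ne_zero _ (pow_ne_zero _ hζ0))]
  have := Int.eq_zero_of_abs_lt_dvd hdvd (by rw [abs_lt]; omega)
  omega

theorem prod_nthRoots_one_add_inv_sub (hζ : IsPrimitiveRoot ζ m) (hm : 0 < m) {α : K}
    (hα : α ≠ 0) :
    ((nthRoots m (1 : K)).map fun z => α + α⁻¹ - (z + z⁻¹)).prod = α ^ m + α⁻¹ ^ m - 2 := by
  have hfactor : ∀ z ∈ nthRoots m (1 : K),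
      α + α⁻¹ - (z + z⁻¹) = α⁻¹ * ((α - z) * (α - z⁻¹)) := by
    intro z hz
    have hz0 : z ≠ 0 := by
      rintro rfl
      simp [mem_nthRoots hm, hm.ne'] at hz
    field_simp
    ring
  have hinv : (nthRoots m (1 : K)).map (·⁻¹) = nthRoots m 1 :=
    hζ.map_nthRoots_one hm inv_injective fun z hz => by rw [inv_pow, hz, inv_one]
  rw [Multiset.map_congr rfl hfactor, Multiset.prod_map_mul, Multiset.prod_map_mul,
    Multiset.map_const', Multiset.prod_replicate, hζ.card_nthRoots_one,
    ← Function.comp_def (α - ·) (·⁻¹), ← Multiset.map_map, hinv, hζ.prod_nthRoots_one_sub hm,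
    inv_pow]
  field_simp
  ring

theorem prod_X_sub_C_nthRoots_one_add_inv [IsAlgClosed K] (hζ : IsPrimitiveRoot ζ m)
    (hm : 0 < m) :
    ((nthRoots m (1 : K)).map fun z => X - C (z + z⁻¹)).prod = dickson 1 1 m - 2 := by
  refine Polynomial.funext fun x => ?_
  obtain ⟨α, hα⟩ : ∃ α : K, α * α - x * α + 1 = 0 := by
    obtain ⟨α, hα⟩ := IsAlgClosed.exists_root (X ^ 2 - C x * X + 1)
      (by rw [(by compute_degree! : (X ^ 2 - C x * X + 1 : K[X]).degree = 2)]; decide)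
    exact ⟨α, by simpa [sq] using hα⟩
  have hα0 : α ≠ 0 := by
    rintro rfl
    simp at hα
  obtain rfl : x = α + α⁻¹ := by
    field_simp
    linear_combination -hα
  simp only [eval_multiset_prod, Multiset.map_map, Function.comp_def, eval_sub, eval_X, eval_C,
    dickson_one_one_eval_add_inv _ _ (mul_inv_cancel₀ hα0), eval_ofNat]
  exact hζ.prod_nthRoots_one_add_inv_sub hm hα0

theorem esymm_nthRoots_one_add_inv_ne_zero [IsAlgClosed K] [CharZero K]
    (hζ : IsPrimitiveRoot ζ m) {j : ℕ} (hj : 2 * j < m) :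
    ((nthRoots m (1 : K)).map fun z => z + z⁻¹).esymm (2 * j) ≠ 0 := by
  have hcoeff := Multiset.prod_X_sub_C_coeff ((nthRoots m (1 : K)).map fun z => z + z⁻¹)
    (k := m - 2 * j) (by simp [hζ.card_nthRoots_one])
  simp only [Multiset.map_map, Function.comp_def, Multiset.card_map, hζ.card_nthRoots_one,
    Nat.sub_sub_self hj.le, hζ.prod_X_sub_C_nthRoots_one_add_inv (by omega)] at hcoeff
  rw [coeff_sub, ← map_one (Int.castRingHom K), ← map_dickson, coeff_map, map_one, ← C_ofNat,
    coeff_C, if_neg (by omega), sub_zero, Even.neg_one_pow ⟨j, two_mul j⟩, one_mul] at hcoeff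
  rw [← hcoeff, eq_intCast, Int.cast_ne_zero]
  intro h0
  simpa [h0] using neg_one_pow_mul_coeff_dickson_one_one_pos m j hj.le

end IsPrimitiveRoot

section laurentEsymm

variable {K : Type*} [Field K]

noncomputable def laurentEsymm (s : Multiset K) (r : ℕ) (u v : K) : K :=
  (s.map fun z => z * v + z⁻¹ * u).esymm r

theorem laurentEsymm_mul_mul (s : Multiset K) (r : ℕ) (c u v : K) :
    laurentEsymm s r (c * u) (c * v) = c ^ r * laurentEsymm s r u v := by
  rw [laurentEsymm, laurentEsymm, ← smul_eq_mul (c ^ r), Multiset.pow_smul_esymm, Multiset.map_map]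
  congr 2
  ext z
  simp only [Function.comp_apply, smul_eq_mul]
  ring

theorem laurentEsymm_rotate {s : Multiset K} {ζ : K} (hζ : ζ ≠ 0) (hs : s.map (ζ * ·) = s)
    (r : ℕ) (u v : K) : laurentEsymm s r (ζ * u) (ζ⁻¹ * v) = laurentEsymm s r u v := by
  conv_lhs => rw [laurentEsymm, ← hs, Multiset.map_map]
  refine congr_arg (Multiset.esymm · r) (Multiset.map_congr rfl fun z _ => ?_)
  simp only [Function.comp_apply, mul_inv]
  field_simp

theorem laurentEsymm_swap (s : Multiset K) (r : ℕ) (u v : K) :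
    laurentEsymm s r u v = laurentEsymm (s.map (·⁻¹)) r v u := by
  simp only [laurentEsymm, Multiset.map_map, Function.comp_def, inv_inv, add_comm]

variable [Infinite K] {ζ : K} {m : ℕ} {s : Multiset K}

theorem laurentEsymm_eq_pow_mul (hζ : IsPrimitiveRoot ζ m) (hs : s.map (ζ * ·) = s) {j : ℕ}
    (hj : 2 * j < m) (u v : K) :
    laurentEsymm s (2 * j) u v = v ^ j * laurentEsymm s (2 * j) u 1 := by
  have hζ0 : ζ ≠ 0 := hζ.ne_zero (by omega)
  set p : K[X] := (s.map fun z => C z * X + C (z⁻¹ * u)).esymm (2 * j)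
  have heval : ∀ x, p.eval x = laurentEsymm s (2 * j) u x := fun x => by
    rw [← coe_evalRingHom, Multiset.map_esymm, Multiset.map_map]
    simp [laurentEsymm]
  have hdeg : p.natDegree ≤ 2 * j := natDegree_esymm_le (by
    simp only [Multiset.mem_map]
    rintro _ ⟨z, -, rfl⟩
    compute_degree) _
  have hrot : ∀ x, p.eval (ζ ^ 2 * x) = (ζ ^ 2) ^ j * p.eval x := fun x => by
    simp only [heval]
    calc laurentEsymm s (2 * j) u (ζ ^ 2 * x)
        = laurentEsymm s (2 * j) (ζ * (ζ⁻¹ * u)) (ζ * (ζ * x)) := by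
          rw [mul_inv_cancel_left₀ hζ0, ← mul_assoc, ← sq]
      _ = (ζ ^ 2) ^ j * laurentEsymm s (2 * j) (ζ * (ζ⁻¹ * u)) (ζ⁻¹ * (ζ * x)) := by
          rw [laurentEsymm_mul_mul, laurentEsymm_rotate hζ0 hs, pow_mul]
      _ = (ζ ^ 2) ^ j * laurentEsymm s (2 * j) u x := by
          rw [mul_inv_cancel_left₀ hζ0, inv_mul_cancel_left₀ hζ0]
  have hp := eq_C_mul_X_pow_of_eval_mul hrot fun t ht => hζ.eq_of_sq_pow_eq (ht.trans hdeg) hj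
  rw [← heval, ← heval, hp]
  simp only [eval_mul, eval_C, eval_pow, eval_X, one_pow, mul_one]
  ring

theorem laurentEsymm_eq_mul_pow_mul (hζ : IsPrimitiveRoot ζ m) (hs : s.map (ζ * ·) = s) {j : ℕ}
    (hj : 2 * j < m) (u v : K) :
    laurentEsymm s (2 * j) u v = (u * v) ^ j * laurentEsymm s (2 * j) 1 1 := by
  have hs' : (s.map (·⁻¹)).map (ζ⁻¹ * ·) = s.map (·⁻¹) := by
    conv_rhs => rw [← hs]
    simp only [Multiset.map_map, Function.comp_def, mul_inv]
  rw [laurentEsymm_eq_pow_mul hζ hs hj, laurentEsymm_swap,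
    laurentEsymm_eq_pow_mul hζ.inv hs' hj, ← laurentEsymm_swap, mul_pow]
  ring

end laurentEsymm

open Complex

theorem ofReal_cos_mul_add_sin_mul (θ x y : ℝ) :
    ((Real.cos θ * x + Real.sin θ * y : ℝ) : ℂ) =
      2⁻¹ * (exp (θ * I) * (x - y * I) + (exp (θ * I))⁻¹ * (x + y * I)) := by
  rw [← exp_neg, ← neg_mul, exp_mul_I, exp_mul_I, cos_neg, sin_neg]
  push_cast
  linear_combination (sin θ * y) * I_sq

theorem ofReal_esymm_regular_polygon {m : ℕ} (hm : m ≠ 0) (r : ℕ) (ξ : ℝ × ℝ) :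
    ((∑ S ∈ (univ : Finset (Fin m)).powersetCard r, ∏ k ∈ S,
        (Real.cos (2 * Real.pi * (k : ℕ) / m) * ξ.1 +
          Real.sin (2 * Real.pi * (k : ℕ) / m) * ξ.2) : ℝ) : ℂ) =
      2⁻¹ ^ r * laurentEsymm (nthRoots m (1 : ℂ)) r (ξ.1 + ξ.2 * I) (ξ.1 - ξ.2 * I) := by
  have hvertex : ∀ k : ℕ, exp (2 * Real.pi * I / m) ^ k = exp (↑(2 * Real.pi * k / m) * I) :=
    fun k => by
      rw [← exp_nat_mul]
      push_cast
      ring_nf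
  rw [laurentEsymm, ← (isPrimitiveRoot_exp m hm).univ_val_map_pow, Multiset.map_map,
    ← smul_eq_mul (2⁻¹ ^ r), Multiset.pow_smul_esymm, Multiset.map_map, esymm_map_val]
  simp only [ofReal_sum, ofReal_prod, ofReal_cos_mul_add_sin_mul, hvertex, Function.comp_apply,
    smul_eq_mul]

theorem esymm_even_regular_polygon_eq_laplacian_power_general (m : ℕ)
    (j : ℕ) (hjm : 2 * j < m) :
    ∃ C : ℝ, C ≠ 0 ∧ ∀ ξ : ℝ × ℝ,
      ∑ S ∈ (Finset.univ : Finset (Fin m)).powersetCard (2 * j),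
        ∏ k ∈ S,
          (Real.cos (2 * Real.pi * (k : ℕ) / m) * ξ.1 +
            Real.sin (2 * Real.pi * (k : ℕ) / m) * ξ.2)
        = C * (ξ.1 ^ 2 + ξ.2 ^ 2) ^ j := by
  have hm : m ≠ 0 := by omega
  have hζ := isPrimitiveRoot_exp m hm
  set c : ℂ := 2⁻¹ ^ (2 * j) * laurentEsymm (nthRoots m 1) (2 * j) 1 1
  have hc : c ≠ 0 := mul_ne_zero (by norm_num) (by
    simpa [laurentEsymm] using hζ.esymm_nthRoots_one_add_inv_ne_zero hjm)
  have key : ∀ ξ : ℝ × ℝ, 2⁻¹ ^ (2 * j) *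
      laurentEsymm (nthRoots m (1 : ℂ)) (2 * j) (ξ.1 + ξ.2 * I) (ξ.1 - ξ.2 * I) =
        ((ξ.1 ^ 2 + ξ.2 ^ 2 : ℝ) : ℂ) ^ j * c := fun ξ => by
    have huv : ((ξ.1 : ℂ) + ξ.2 * I) * (ξ.1 - ξ.2 * I) = ξ.1 ^ 2 + ξ.2 ^ 2 := by
      linear_combination (-(ξ.2 : ℂ) ^ 2) * I_sq
    rw [laurentEsymm_eq_mul_pow_mul hζ (hζ.map_mul_nthRoots_one (by omega)) hjm, huv]
    push_cast
    ring
  obtain ⟨C, hC⟩ : ∃ C : ℝ, (C : ℂ) = c :=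
    ⟨_, (ofReal_esymm_regular_polygon hm _ (1, 0)).trans ((key (1, 0)).trans (by simp))⟩
  refine ⟨C, by exact_mod_cast hC ▸ hc, fun ξ => ofReal_injective ?_⟩
  rw [ofReal_esymm_regular_polygon hm, key, ofReal_mul, ofReal_pow, hC, mul_comm]

/-- for the vertices `u_k = (cos(2πk/m), sin(2πk/m))` of a regular
`m`-gon centered at the origin and every even degree `2j` with `0 < 2j < m`, the
elementary symmetric polynomial of the dot products `⟨u_k, ξ⟩` is a nonzero constant
multiple of `(ξ₁² + ξ₂²)^j`. -/
theorem esymm_even_regular_polygon_eq_laplacian_power (m : ℕ) (hm : 3 ≤ m)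
    (j : ℕ) (h0 : 0 < 2 * j) (hjm : 2 * j < m) :
    ∃ C : ℝ, C ≠ 0 ∧ ∀ ξ : ℝ × ℝ,
      ∑ S ∈ (Finset.univ : Finset (Fin m)).powersetCard (2 * j),
        ∏ k ∈ S,
          (Real.cos (2 * Real.pi * (k : ℕ) / m) * ξ.1 +
            Real.sin (2 * Real.pi * (k : ℕ) / m) * ξ.2)
        = C * (ξ.1 ^ 2 + ξ.2 ^ 2) ^ j :=
  esymm_even_regular_polygon_eq_laplacian_power_general m j hjm
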